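/- Let X be an infinite irreducible T1 topological space, f : X → X any map, and S ⊆ X. Let X_f^dense = {P ∈ X : O_f(P) is dense in X}. Assume: (i) every complete set of representatives for grand-orbit equivalence on S is dense in X, and (ii) X_f^dense contains a nonempty open subset of X. Then every complete set of representatives for grand-orbit equivalence on S ∩ X_f^dense is dense in X. -/
import Mathlib


/-- The forward orbit of `P` under `f`: all iterates `f^[n] P` for `n ≥ 0`. -/
def fwdOrbit {X : Type*} (f : X → X) (P : X) : Set X := Set.range fun n => f^[n] P

/-- Grand-orbit equivalence: `P ≡_f Q` iff the forward orbits of `P` and `Q` meet. -/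
def goEquiv {X : Type*} (f : X → X) (P Q : X) : Prop :=
  (fwdOrbit f P ∩ fwdOrbit f Q).Nonempty

/-- `Q` is a complete set of representatives for grand-orbit equivalence on `S`:
`Q ⊆ S` and every point of `S` is grand-orbit equivalent to exactly one point of `Q`. -/
def IsCompleteReps {X : Type*} (f : X → X) (S Q : Set X) : Prop :=
  Q ⊆ S ∧ ∀ s ∈ S, ∃! q, q ∈ Q ∧ goEquiv f s q

/-- The set of points with dense forward `f`-orbit. -/
def denseOrbitSet {X : Type*} [TopologicalSpace X] (f : X → X) : Set X :=
  {P | Dense (fwdOrbit f P)}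

theorem goEquiv_refl {X : Type*} (f : X → X) (P : X) : goEquiv f P P :=
  ⟨P, ⟨0, rfl⟩, ⟨0, rfl⟩⟩

theorem goEquiv_symm {X : Type*} {f : X → X} {P Q : X} (h : goEquiv f P Q) :
    goEquiv f Q P := by
  obtain ⟨x, h1, h2⟩ := h
  exact ⟨x, h2, h1⟩

theorem goEquiv_trans {X : Type*} {f : X → X} {P Q R : X}
    (h1 : goEquiv f P Q) (h2 : goEquiv f Q R) : goEquiv f P R := by
  obtain ⟨x, ⟨a, ha⟩, ⟨b, hb⟩⟩ := h1
  obtain ⟨y, ⟨c, hc⟩, ⟨d, hd⟩⟩ := h2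
  refine ⟨f^[c + a] P, ⟨c + a, rfl⟩, ⟨b + d, ?_⟩⟩
  simp only at ha hb hc hd
  calc f^[b + d] R = f^[b] (f^[d] R) := Function.iterate_add_apply f b d R
    _ = f^[b] (f^[c] Q) := by rw [hd, hc]
    _ = f^[c] (f^[b] Q) := by
        rw [← Function.iterate_add_apply, ← Function.iterate_add_apply, Nat.add_comm]
    _ = f^[c] (f^[a] P) := by rw [hb, ha]
    _ = f^[c + a] P := (Function.iterate_add_apply f c a P).symm

/-- Every set admits a complete set of representatives for grand-orbit equivalence. -/
theorem exists_completeReps {X : Type*} (f : X → X) (T : Set X) :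
    ∃ R : Set X, R ⊆ T ∧ ∀ t ∈ T, ∃! r, r ∈ R ∧ goEquiv f t r := by
  classical
  letI s : Setoid T :=
    ⟨fun a b => goEquiv f a b,
      ⟨fun a => goEquiv_refl f a, fun h => goEquiv_symm h, fun h1 h2 => goEquiv_trans h1 h2⟩⟩
  let rep : T → T := fun t => (Quotient.mk s t).out
  have hrep_equiv : ∀ t : T, goEquiv f (t : X) (rep t : X) := by
    intro t
    exact goEquiv_symm (Quotient.mk_out t)
  refine ⟨Subtype.val '' Set.range rep, ?_, ?_⟩
  · rintro x ⟨u, _, rfl⟩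
    exact u.2
  · intro t ht
    refine ⟨(rep ⟨t, ht⟩ : X), ⟨⟨rep ⟨t, ht⟩, ⟨⟨t, ht⟩, rfl⟩, rfl⟩, hrep_equiv ⟨t, ht⟩⟩, ?_⟩
    rintro r ⟨⟨r', ⟨u, rfl⟩, rfl⟩, hr⟩
    -- `r = rep u`, and `t ≈ rep u`. Also `t ≈ rep ⟨t,ht⟩`. Show classes equal.
    have h1 : (⟨t, ht⟩ : T) ≈ rep u := hr
    have h2 : (u : T) ≈ rep u := hrep_equiv u
    have : Quotient.mk s u = Quotient.mk s ⟨t, ht⟩ :=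
      Quotient.sound (Setoid.trans h2 (Setoid.symm h1))
    show ((rep u : T) : X) = _
    simp only [rep, this]

/-- If every complete set of representatives for grand-orbit equivalence on `S` is
dense, and `X_f^dense` contains a nonempty open set, then every complete set of
representatives for grand-orbit equivalence on `S ∩ X_f^dense` is dense. -/
theorem C2forall_and_open_implies_C3forall {X : Type*} [TopologicalSpace X] [T1Space X]
    [IrreducibleSpace X] [Infinite X] (f : X → X) (S : Set X)
    (hC2 : ∀ Q : Set X, IsCompleteReps f S Q → Dense Q)
    (hopen : ∃ U : Set X, IsOpen U ∧ U.Nonempty ∧ U ⊆ denseOrbitSet f) :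
    ∀ Q : Set X, IsCompleteReps f (S ∩ denseOrbitSet f) Q → Dense Q := by
  intro Q hQ
  obtain ⟨hQsub, hQrep⟩ := hQ
  set T := {s ∈ S | ∀ q ∈ Q, ¬ goEquiv f s q} with hTdef
  obtain ⟨R, hRT, hRrep⟩ := exists_completeReps f T
  have hQR : IsCompleteReps f S (Q ∪ R) := by
    constructor
    · rintro x (hx | hx)
      · exact (hQsub hx).1
      · exact (hRT hx).1
    · intro s hs
      by_cases h : ∃ q ∈ Q, goEquiv f s q
      · obtain ⟨q, hqQ, hq⟩ := h
        refine ⟨q, ⟨Or.inl hqQ, hq⟩, ?_⟩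
        rintro r ⟨hr | hrR, hsr⟩
        · obtain ⟨q', _, huniq⟩ := hQrep q (hQsub hqQ)
          have e1 := huniq r ⟨hr, goEquiv_trans (goEquiv_symm hq) hsr⟩
          have e2 := huniq q ⟨hqQ, goEquiv_refl f q⟩
          rw [e1, e2]
        · exact absurd (goEquiv_trans (goEquiv_symm hsr) hq) ((hRT hrR).2 q hqQ)
      · have hsT : s ∈ T := ⟨hs, fun q hq hg => h ⟨q, hq, hg⟩⟩
        obtain ⟨r, ⟨hrR, hsr⟩, huniq⟩ := hRrep s hsT
        refine ⟨r, ⟨Or.inr hrR, hsr⟩, ?_⟩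
        rintro r' ⟨hr' | hr', hsr'⟩
        · exact absurd ⟨r', hr', hsr'⟩ h
        · exact huniq r' ⟨hr', hsr'⟩
  have hdense := hC2 _ hQR
  obtain ⟨U, hUopen, hUne, hUD⟩ := hopen
  rw [dense_iff_inter_open]
  intro V hVopen hVne
  by_contra hempty
  rw [Set.not_nonempty_iff_eq_empty] at hempty
  have hUVne : (V ∩ U).Nonempty :=
    (hUopen.dense hUne).inter_open_nonempty V hVopen hVne
  obtain ⟨w, hwVU, hwQR⟩ := hdense.inter_open_nonempty _ (hVopen.inter hUopen) hUVne
  rcases hwQR with hwQ | hwR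
  · have : w ∈ V ∩ Q := ⟨hwVU.1, hwQ⟩
    rw [hempty] at this
    exact this
  · have hwT : w ∈ T := hRT hwR
    have hwSD : w ∈ S ∩ denseOrbitSet f := ⟨hwT.1, hUD hwVU.2⟩
    obtain ⟨q, ⟨hq, hwq⟩, -⟩ := hQrep w hwSD
    exact hwT.2 q hq hwq
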